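/- Let f : ℝ^d → ℝ be convex and differentiable with minimizer x̄, let p ≥ 2, C > 0, and α_t = log p − log t, β_t = p log t + log C, γ_t = p log t. Suppose (X_t, Y_t) solves dX_t/dt = e^{α_t−γ_t} Y_t, dY_t/dt = −e^{α_t+β_t+γ_t} ∇f(X_t) on (t₀, ∞). Then the function V(t) = (1/2)|X_t + e^{−γ_t} Y_t − x̄|² + e^{β_t}(f(X_t) − f(x̄)) is non-increasing in t. -/

import Mathlib

/-!
For `α = log p - log t`, `β = p log t + log C`, `γ = p log t` the ideal scaling conditions
`β' = γ' = exp α` hold. Under them the point `X + exp (-γ) • Y` moves with velocity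
`-exp (α + β) • ∇f(X)`, so in `V'` the momentum terms cancel and
`V' = exp (α + β) * (f X - f x̄ - ⟪∇f X, X - x̄⟫)`, which is nonpositive by the first-order
characterization of convexity.
-/

open Real

open scoped RealInnerProductSpace

theorem ConvexOn.add_fderiv_sub_le {E : Type*} [NormedAddCommGroup E] [NormedSpace ℝ E]
    {s : Set E} {f : E → ℝ} {f' : E →L[ℝ] ℝ} {x y : E}
    (hf : ConvexOn ℝ s f) (hx : x ∈ s) (hy : y ∈ s) (hf' : HasFDerivAt f f' x) :
    f x + f' (y - x) ≤ f y := by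
  let c : ℝ →ᵃ[ℝ] E := AffineMap.lineMap x y
  have hc : HasDerivAt c (y - x) 0 := AffineMap.hasDerivAt_lineMap
  have hslope := (hf.comp_affineMap c).le_slope_of_hasDerivAt (x := 0) (y := 1)
    (by simpa [c] using hx) (by simpa [c] using hy) zero_lt_one
    ((by simpa [c] using hf' : HasFDerivAt f f' (c 0)).comp_hasDerivAt 0 hc)
  simp [c, slope_def_field] at hslope
  rw [map_sub]
  linarith

theorem hasDerivAt_const_mul_log {p t : ℝ} (hp : 0 < p) (ht : 0 < t) :
    HasDerivAt (fun s ↦ p * log s) (exp (log p - log t)) t := by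
  rw [exp_sub, exp_log hp, exp_log ht]
  simpa [div_eq_mul_inv] using (hasDerivAt_log ht.ne').const_mul p

section Lyapunov

variable {E : Type*} [NormedAddCommGroup E] [InnerProductSpace ℝ E]

noncomputable def lyapunovEnergy (f : E → ℝ) (xbar : E) (β γ : ℝ → ℝ) (X Y : ℝ → E) (t : ℝ) :
    ℝ :=
  1 / 2 * ‖X t + exp (-γ t) • Y t - xbar‖ ^ 2 + exp (β t) * (f (X t) - f xbar)

variable {f : E → ℝ} {xbar : E} {α β γ : ℝ → ℝ} {X Y : ℝ → E} {g : E} {t : ℝ}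

theorem hasDerivAt_add_exp_neg_smul
    (hX : HasDerivAt X (exp (α t - γ t) • Y t) t)
    (hY : HasDerivAt Y (-exp (α t + β t + γ t) • g) t)
    (hγ : HasDerivAt γ (exp (α t)) t) :
    HasDerivAt (fun s ↦ X s + exp (-γ s) • Y s) (-exp (α t + β t) • g) t := by
  refine (hX.add (hγ.neg.exp.smul hY)).congr_deriv ?_
  have h : exp (-γ t) * exp (γ t) = 1 := by rw [← exp_add]; simp
  simp only [Pi.neg_apply, sub_eq_add_neg, exp_add, smul_smul]
  linear_combination (norm := module) (-(exp (α t) * exp (β t))) • h • g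

theorem hasDerivAt_lyapunovEnergy [CompleteSpace E] (hf : HasGradientAt f g (X t))
    (hX : HasDerivAt X (exp (α t - γ t) • Y t) t)
    (hY : HasDerivAt Y (-exp (α t + β t + γ t) • g) t)
    (hβ : HasDerivAt β (exp (α t)) t) (hγ : HasDerivAt γ (exp (α t)) t) :
    HasDerivAt (lyapunovEnergy f xbar β γ X Y)
      (exp (α t + β t) * (f (X t) - f xbar - ⟪g, X t - xbar⟫)) t := by
  have hZ := ((hasDerivAt_add_exp_neg_smul hX hY hγ).sub_const xbar).norm_sq
  have hfX : HasDerivAt (fun s ↦ f (X s)) (exp (α t - γ t) * ⟪g, Y t⟫) t :=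
    (hf.hasFDerivAt.comp_hasDerivAt t hX).congr_deriv (by simp)
  refine ((hZ.const_mul (1 / 2)).add (hβ.exp.mul (hfX.sub_const (f xbar)))).congr_deriv ?_
  simp only [real_inner_smul_right, inner_sub_right, inner_add_right, real_inner_comm g, exp_add,
    exp_sub, exp_neg]
  field_simp
  ring

theorem antitoneOn_lyapunovEnergy [CompleteSpace E] {D : Set ℝ} (hDo : IsOpen D)
    (hD : Convex ℝ D) (hconv : ConvexOn ℝ Set.univ f) (hdiff : Differentiable ℝ f)
    (hβ : ∀ t ∈ D, HasDerivAt β (exp (α t)) t) (hγ : ∀ t ∈ D, HasDerivAt γ (exp (α t)) t)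
    (hX : ∀ t ∈ D, HasDerivAt X (exp (α t - γ t) • Y t) t)
    (hY : ∀ t ∈ D, HasDerivAt Y (-exp (α t + β t + γ t) • gradient f (X t)) t) :
    AntitoneOn (lyapunovEnergy f xbar β γ X Y) D := by
  have hV (t) (ht : t ∈ D) := hasDerivAt_lyapunovEnergy (xbar := xbar)
    (hdiff (X t)).hasGradientAt (hX t ht) (hY t ht) (hβ t ht) (hγ t ht)
  refine antitoneOn_of_hasDerivWithinAt_nonpos hD
    (fun t ht ↦ (hV t ht).continuousAt.continuousWithinAt)
    (by rw [hDo.interior_eq]; exact fun t ht ↦ (hV t ht).hasDerivWithinAt) ?_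
  rw [hDo.interior_eq]
  intro t _
  have hfirstOrder := hconv.add_fderiv_sub_le (Set.mem_univ (X t)) (Set.mem_univ xbar)
    (hdiff (X t)).hasGradientAt.hasFDerivAt
  rw [InnerProductSpace.toDual_apply_apply, ← neg_sub, inner_neg_right] at hfirstOrder
  exact mul_nonpos_of_nonneg_of_nonpos (exp_pos _).le (by linarith)

end Lyapunov

theorem nesterov_lyapunov_nonincreasing_general (d : ℕ) (p C t₀ : ℝ)
    (hp : 2 ≤ p) (ht₀ : 0 < t₀)
    (f : EuclideanSpace ℝ (Fin d) → ℝ)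
    (hconv : ConvexOn ℝ Set.univ f) (hdiff : Differentiable ℝ f)
    (xbar : EuclideanSpace ℝ (Fin d))
    (α β γ : ℝ → ℝ)
    (hα : ∀ t, α t = Real.log p - Real.log t)
    (hβ : ∀ t, β t = p * Real.log t + Real.log C)
    (hγ : ∀ t, γ t = p * Real.log t)
    (X Y : ℝ → EuclideanSpace ℝ (Fin d))
    (hX : ∀ t ∈ Set.Ioi t₀, HasDerivAt X (Real.exp (α t - γ t) • Y t) t)
    (hY : ∀ t ∈ Set.Ioi t₀,
      HasDerivAt Y (-(Real.exp (α t + β t + γ t)) • gradient f (X t)) t)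
    (V : ℝ → ℝ)
    (hV : ∀ t, V t = (1/2) * ‖X t + Real.exp (-γ t) • Y t - xbar‖^2
        + Real.exp (β t) * (f (X t) - f xbar)) :
    AntitoneOn V (Set.Ioi t₀) := by
  have hp₀ : 0 < p := by linarith
  obtain rfl : V = lyapunovEnergy f xbar β γ X Y := funext hV
  refine antitoneOn_lyapunovEnergy isOpen_Ioi (convex_Ioi t₀) hconv hdiff
    (fun t ht ↦ ?_) (fun t ht ↦ ?_) hX hY
  · rw [funext hβ, hα]
    exact (hasDerivAt_const_mul_log hp₀ (ht₀.trans ht)).add_const _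
  · rw [funext hγ, hα]
    exact hasDerivAt_const_mul_log hp₀ (ht₀.trans ht)

theorem nesterov_lyapunov_nonincreasing (d : ℕ) (p C t₀ : ℝ)
    (hp : 2 ≤ p) (hC : 0 < C) (ht₀ : 0 < t₀)
    (f : EuclideanSpace ℝ (Fin d) → ℝ)
    (hconv : ConvexOn ℝ Set.univ f) (hdiff : Differentiable ℝ f)
    (xbar : EuclideanSpace ℝ (Fin d)) (hmin : ∀ x, f xbar ≤ f x)
    (α β γ : ℝ → ℝ)
    (hα : ∀ t, α t = Real.log p - Real.log t)
    (hβ : ∀ t, β t = p * Real.log t + Real.log C)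
    (hγ : ∀ t, γ t = p * Real.log t)
    (X Y : ℝ → EuclideanSpace ℝ (Fin d))
    (hX : ∀ t ∈ Set.Ioi t₀, HasDerivAt X (Real.exp (α t - γ t) • Y t) t)
    (hY : ∀ t ∈ Set.Ioi t₀,
      HasDerivAt Y (-(Real.exp (α t + β t + γ t)) • gradient f (X t)) t)
    (V : ℝ → ℝ)
    (hV : ∀ t, V t = (1/2) * ‖X t + Real.exp (-γ t) • Y t - xbar‖^2
        + Real.exp (β t) * (f (X t) - f xbar)) :
    AntitoneOn V (Set.Ioi t₀) :=
  nesterov_lyapunov_nonincreasing_general d p C t₀ hp ht₀ f hconv hdiff xbar α β γ hα hβ hγ X Y hX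
    hY V hV
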